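/- arXiv:1907.01232 — 5 statements merged into one kernel-verified Lean document; each statement's English description precedes it below -/
import Mathlib

section
/- Let P ∈ ℤ[X] have degree d and height H, with leading coefficient a_d and complex roots α_1,...,α_d. The polynomial M(X) = a_d^{2(d-1)} ∏_{i<j} (X - (α_i - α_j)^2) has integer coefficients, and its height is bounded by c·H^{2(d-1)} for a constant c depending only on d. -/
/-!
Let `M_d = ∏_{i<j} (X - (x_i - x_j)^2)` over `ℤ[x_0, …, x_{d-1}]`. Its coefficients are symmetric
of degree at most `2(d-1)` in `x_0`, so each one is `Q(e_1, …, e_d)` for an integer polynomial `Q`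
of total degree at most `2(d-1)`: the lex-leading monomial of `e^t` is `x_0^{|t|} ⋯`. Specializing
`x_i ↦ α_i` and using Vieta, `a e_k(α) = ± a_{d-k}`, the number `a^{2(d-1)} Q(e(α))` is the value of
the degree-`2(d-1)` homogenization of `Q` at the integers `(a, -a_{d-1}, a_{d-2}, …)`. So it is an
integer, bounded by `(∑ |coefficients of Q|) · H^{2(d-1)}`.
-/

open Polynomial Finset

namespace Finset

variable {ι M : Type*} [LinearOrder ι] [Fintype ι] [LocallyFiniteOrderTop ι] [CommMonoid M]

theorem prod_Ioi_eq_prod_not_isDiag (h : Sym2 ι → M) :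
    ∏ i, ∏ j ∈ Ioi i, h s(i, j) = ∏ z with ¬ z.IsDiag, h z := by
  rw [prod_sigma']
  refine prod_nbij' (fun p => s(p.1, p.2)) (fun z => ⟨z.inf, z.sup⟩) ?_ ?_ ?_ ?_ (fun _ _ => rfl)
  · rintro ⟨i, j⟩ hij
    simp_all [(mem_Ioi.1 (mem_sigma.1 hij).2).ne]
  · rintro ⟨i, j⟩ hij
    simp_all [Ne.symm]
  · rintro ⟨i, j⟩ hij
    simp_all [(mem_Ioi.1 (mem_sigma.1 hij).2).le]
  · rintro ⟨i, j⟩ -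
    simp [le_total]

theorem prod_Ioi_comp_perm (g : ι → ι → M) (hg : ∀ i j, g i j = g j i) (σ : Equiv.Perm ι) :
    ∏ i, ∏ j ∈ Ioi i, g (σ i) (σ j) = ∏ i, ∏ j ∈ Ioi i, g i j := by
  have hσ := prod_Ioi_eq_prod_not_isDiag fun z => Sym2.lift ⟨g, hg⟩ (z.map σ)
  have hid := prod_Ioi_eq_prod_not_isDiag (Sym2.lift ⟨g, hg⟩)
  simp only [Sym2.map_mk, Sym2.lift_mk] at hσ hid
  rw [hσ, hid]
  refine prod_nbij' (Sym2.map σ) (Sym2.map σ.symm) ?_ ?_ ?_ ?_ ?_ <;>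
    simp [Sym2.isDiag_map σ.injective, Sym2.isDiag_map σ.symm.injective, Sym2.map_map]

end Finset

theorem Finsupp.Lex.apply_bot_le_of_le {α N : Type*} [LinearOrder α] [OrderBot α] [LinearOrder N]
    [Zero N] {x y : Lex (α →₀ N)} (h : x ≤ y) : ofLex x ⊥ ≤ ofLex y ⊥ := by
  obtain h | rfl := h.lt_or_eq
  · obtain ⟨i, hi, hlt⟩ := Finsupp.Lex.lt_iff.1 h
    obtain rfl | hbi := eq_bot_or_bot_lt i
    · exact hlt.le
    · exact (hi ⊥ hbi).le
  · rfl

namespace MvPolynomial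

section homogenizedEval

variable {σ R : Type*} [Fintype σ] [CommRing R]

theorem sum_apply_le_totalDegree {q : MvPolynomial σ R} {t : σ →₀ ℕ} (ht : t ∈ q.support) :
    ∑ i, t i ≤ q.totalDegree :=
  (Finsupp.sum_fintype _ _ fun _ => rfl).symm.trans_le (le_totalDegree ht)

-- The value `a ^ m * q (w / a)` at `(a, w)` of the degree-`m` homogenization of `q`.
noncomputable def homogenizedEval (q : MvPolynomial σ R) (m : ℕ) (a : R) (w : σ → R) : R :=
  ∑ t ∈ q.support, q.coeff t * a ^ (m - ∑ i, t i) * ∏ i, w i ^ t i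

theorem algebraMap_pow_mul_aeval {S : Type*} [CommRing S] [Algebra R S] {q : MvPolynomial σ R}
    {m : ℕ} (hq : q.totalDegree ≤ m) {a : R} {w : σ → R} {b : σ → S}
    (hb : ∀ i, algebraMap R S a * b i = algebraMap R S (w i)) :
    algebraMap R S a ^ m * aeval b q = algebraMap R S (q.homogenizedEval m a w) := by
  rw [aeval_def, eval₂_eq', mul_sum, homogenizedEval, map_sum]
  refine sum_congr rfl fun t ht => ?_
  have hm : m = (m - ∑ i, t i) + ∑ i, t i :=
    (Nat.sub_add_cancel ((sum_apply_le_totalDegree ht).trans hq)).symm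
  simp only [map_mul, map_pow, map_prod, ← hb, mul_pow, prod_mul_distrib, prod_pow_eq_pow_sum]
  conv_lhs => rw [hm, pow_add]
  ring

theorem abs_homogenizedEval_le {S : Type*} [CommRing S] [LinearOrder S] [IsStrictOrderedRing S]
    (f : R →+* S) {q : MvPolynomial σ R} {m : ℕ} (hq : q.totalDegree ≤ m) {a : R} {w : σ → R}
    {H : S} (ha : |f a| ≤ H) (hw : ∀ i, |f (w i)| ≤ H) :
    |f (q.homogenizedEval m a w)| ≤ (∑ t ∈ q.support, |f (q.coeff t)|) * H ^ m := by
  rw [homogenizedEval, map_sum, sum_mul]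
  refine (abs_sum_le_sum_abs _ _).trans (sum_le_sum fun t ht => ?_)
  have hm : m - ∑ i, t i + ∑ i, t i = m :=
    Nat.sub_add_cancel ((sum_apply_le_totalDegree ht).trans hq)
  have hH : 0 ≤ H := (abs_nonneg _).trans ha
  calc |f (q.coeff t * a ^ (m - ∑ i, t i) * ∏ i, w i ^ t i)|
      = |f (q.coeff t)| * |f a| ^ (m - ∑ i, t i) * ∏ i, |f (w i)| ^ t i := by
        simp only [map_mul, map_pow, map_prod, abs_mul, abs_pow, abs_prod]
    _ ≤ |f (q.coeff t)| * H ^ (m - ∑ i, t i) * ∏ i, H ^ t i := by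
        gcongr with i
        exact hw i
    _ = |f (q.coeff t)| * H ^ m := by rw [prod_pow_eq_pow_sum, mul_assoc, ← pow_add, hm]

end homogenizedEval

open AddMonoidAlgebra in
theorem totalDegree_le_degreeOf_esymmAlgHom {R : Type*} [CommRing R] {n : ℕ}
    (q : MvPolynomial (Fin (n + 1)) R) :
    q.totalDegree ≤ (esymmAlgHom (Fin (n + 1)) R (n + 1) q).val.degreeOf 0 := by
  classical
  obtain rfl | hq := eq_or_ne q 0
  · simp
  set f := fun t => esymmAlgHomMonomial (Fin (n + 1)) t (q.coeff t)
  have hp : (esymmAlgHom (Fin (n + 1)) R (n + 1) q).val = ∑ t ∈ q.support, f t := by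
    conv_lhs => rw [q.as_sum]
    rw [map_sum, AddSubmonoidClass.coe_finsetSum]
    rfl
  set p := (esymmAlgHom (Fin (n + 1)) R (n + 1) q).val
  have hacc : ∀ t ∈ q.support, ⇑(ofLex (supDegree toLex (f t))) = Fin.accumulate _ _ t :=
    fun t ht => supDegree_esymmAlgHomMonomial (mem_support_iff.1 ht) t le_rfl
  -- The leading monomials `accumulate t` are distinct, so the largest one is not cancelled.
  obtain ⟨t₀, ht₀, hmax⟩ := q.support.exists_max_image (fun t => supDegree toLex (f t))
    (support_nonempty.2 hq)
  have hlt : ∀ t ∈ q.support, t ≠ t₀ → supDegree toLex (f t) < supDegree toLex (f t₀) := by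
    refine fun t ht hne => (hmax t ht).lt_of_ne fun he => hne ?_
    refine DFunLike.ext' (Fin.accumulate_injective le_rfl ?_)
    rw [← hacc t ht, ← hacc t₀ ht₀, he]
  obtain ⟨hsup, hlead⟩ := hp ▸ supDegree_leadingCoeff_sum_eq ht₀ hlt
  have hp0 : p ≠ 0 := by
    rw [← leadingCoeff_ne_zero toLex.injective, hlead, leadingCoeff_esymmAlgHomMonomial _ le_rfl]
    exact mem_support_iff.1 ht₀
  obtain ⟨μ, hμ, hμp⟩ := exists_supDegree_mem_support toLex hp0
  refine Finset.sup_le fun t ht => ?_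
  calc t.sum (fun _ e => e) = Fin.accumulate _ (n + 1) t 0 := by
        simp [Finsupp.sum_fintype, Fin.accumulate_apply]
    _ = ofLex (supDegree toLex (f t)) ⊥ := (congrFun (hacc t ht) 0).symm
    _ ≤ ofLex (supDegree toLex (f t₀)) ⊥ := Finsupp.Lex.apply_bot_le_of_le (hmax t ht)
    _ = μ 0 := by rw [← hsup, hμp]; rfl
    _ ≤ p.degreeOf 0 := monomial_le_degreeOf 0 hμ

theorem degreeOf_zero_sq_X_sub_X_le {R : Type*} [CommRing R] [Nontrivial R] {n : ℕ}
    {i j : Fin (n + 1)} (hij : i < j) :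
    degreeOf 0 ((X i - X j : MvPolynomial (Fin (n + 1)) R) ^ 2) ≤ if i = 0 then 2 else 0 := by
  refine (degreeOf_pow_le _ _ _).trans ?_
  have hj : j ≠ 0 := (lt_of_le_of_lt (Fin.zero_le i) hij).ne'
  have hsub := degreeOf_sub_le (R := R) 0 (X i) (X j)
  rw [degreeOf_X_of_ne (Ne.symm hj)] at hsub
  split_ifs with hi
  · subst hi
    rw [degreeOf_X_self] at hsub
    omega
  · rw [degreeOf_X_of_ne (Ne.symm hi)] at hsub
    omega

end MvPolynomial

namespace Polynomial

section degreeOf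

variable {σ R : Type*} [CommRing R] (v : σ)

theorem degreeOf_coeff_mul_le {f g : (MvPolynomial σ R)[X]} {a b : ℕ}
    (hf : ∀ n, (f.coeff n).degreeOf v ≤ a) (hg : ∀ n, (g.coeff n).degreeOf v ≤ b) (n : ℕ) :
    ((f * g).coeff n).degreeOf v ≤ a + b := by
  rw [coeff_mul]
  refine (MvPolynomial.degreeOf_sum_le _ _ _).trans (Finset.sup_le fun x _ => ?_)
  exact (MvPolynomial.degreeOf_mul_le _ _ _).trans (add_le_add (hf _) (hg _))

theorem degreeOf_coeff_prod_le {ι : Type*} (s : Finset ι) (f : ι → (MvPolynomial σ R)[X])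
    (b : ι → ℕ) (h : ∀ i ∈ s, ∀ n, ((f i).coeff n).degreeOf v ≤ b i) (n : ℕ) :
    ((∏ i ∈ s, f i).coeff n).degreeOf v ≤ ∑ i ∈ s, b i := by
  induction s using Finset.cons_induction generalizing n with
  | empty =>
    rw [prod_empty, coeff_one]
    split_ifs <;> simp [MvPolynomial.degreeOf_zero, MvPolynomial.degreeOf_one]
  | cons a s ha ih =>
    rw [prod_cons, sum_cons]
    exact degreeOf_coeff_mul_le v (h a (mem_cons_self a s))
      (ih fun i hi => h i (mem_cons_of_mem hi)) n

theorem degreeOf_coeff_X_sub_C_le (c : MvPolynomial σ R) (n : ℕ) :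
    ((X - C c).coeff n).degreeOf v ≤ c.degreeOf v := by
  rw [coeff_sub, coeff_X, coeff_C]
  split_ifs <;> first | omega |
    simp [MvPolynomial.degreeOf_zero, MvPolynomial.degreeOf_one, MvPolynomial.degreeOf_neg]

end degreeOf

section roots

variable {R S : Type*} [CommRing R] [CommRing S] [Algebra R S] {d : ℕ} {P : R[X]} {a : R}
  {α : Fin d → S}

theorem algebraMap_mul_aeval_esymm
    (h : P.map (algebraMap R S) = C (algebraMap R S a) * ∏ i, (X - C (α i)))
    {k : ℕ} (hk : k ≤ d) :
    algebraMap R S a * MvPolynomial.aeval α (MvPolynomial.esymm (Fin d) R k) =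
      algebraMap R S ((-1) ^ k * P.coeff (d - k)) := by
  have hprod : ∏ i, (X - C (α i)) = ((univ.val.map α).map fun t => X - C t).prod := by
    rw [prod_eq_multiset_prod, Multiset.map_map]
    rfl
  have hcoeff := congrArg (coeff · (d - k)) h
  simp only [coeff_map, coeff_C_mul, hprod] at hcoeff
  rw [Multiset.prod_X_sub_C_coeff _ (by simp)] at hcoeff
  simp only [Multiset.card_map, card_val, card_univ, Fintype.card_fin, Nat.sub_sub_self hk]
    at hcoeff
  rw [MvPolynomial.aeval_esymm_eq_multiset_esymm, map_mul, hcoeff, map_pow, map_neg, map_one]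
  have hsign : ((-1 : S) ^ k) ^ 2 = 1 := by rw [← pow_mul, pow_mul', neg_one_sq, one_pow]
  linear_combination -(algebraMap R S a * (univ.val.map α).esymm k) * hsign

theorem algebraMap_pow_mul_aeval_esymmAlgHom
    (h : P.map (algebraMap R S) = C (algebraMap R S a) * ∏ i, (X - C (α i)))
    {q : MvPolynomial (Fin d) R} {m : ℕ} (hq : q.totalDegree ≤ m) :
    algebraMap R S a ^ m * MvPolynomial.aeval α (MvPolynomial.esymmAlgHom (Fin d) R d q).val =
      algebraMap R S
        (q.homogenizedEval m a fun i => (-1) ^ (i + 1 : ℕ) * P.coeff (d - (i + 1))) := by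
  rw [MvPolynomial.esymmAlgHom_apply, MvPolynomial.comp_aeval_apply]
  exact MvPolynomial.algebraMap_pow_mul_aeval hq fun i => algebraMap_mul_aeval_esymm h i.isLt

end roots

end Polynomial

section sqDiffPoly

variable (R : Type*) [CommRing R] (d : ℕ)

noncomputable def sqDiffPoly : (MvPolynomial (Fin d) R)[X] :=
  ∏ i, ∏ j ∈ Ioi i, (X - C ((MvPolynomial.X i - MvPolynomial.X j) ^ 2))

variable {R d}

theorem map_sqDiffPoly {S : Type*} [CommRing S] (f : MvPolynomial (Fin d) R →+* S) :
    (sqDiffPoly R d).map f =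
      ∏ i, ∏ j ∈ Ioi i, (X - C ((f (MvPolynomial.X i) - f (MvPolynomial.X j)) ^ 2)) := by
  simp [sqDiffPoly, Polynomial.map_prod]

theorem isSymmetric_coeff_sqDiffPoly (k : ℕ) : ((sqDiffPoly R d).coeff k).IsSymmetric := by
  intro σ
  have hmap : (sqDiffPoly R d).map (MvPolynomial.rename σ).toRingHom = sqDiffPoly R d := by
    rw [map_sqDiffPoly]
    simp only [AlgHom.toRingHom_eq_coe, RingHom.coe_coe, MvPolynomial.rename_X]
    exact prod_Ioi_comp_perm
      (fun i j => X - C ((MvPolynomial.X i - MvPolynomial.X j) ^ 2 : MvPolynomial (Fin d) R))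
      (fun i j => by rw [← neg_sub (MvPolynomial.X j) (MvPolynomial.X i), neg_sq]) σ
  calc MvPolynomial.rename σ ((sqDiffPoly R d).coeff k)
      = ((sqDiffPoly R d).map (MvPolynomial.rename σ).toRingHom).coeff k := (coeff_map _ _).symm
    _ = (sqDiffPoly R d).coeff k := by rw [hmap]

theorem degreeOf_coeff_sqDiffPoly_le [Nontrivial R] {n : ℕ} (k : ℕ) :
    ((sqDiffPoly R (n + 1)).coeff k).degreeOf 0 ≤ 2 * n := by
  -- `x_0` occurs only in the `n` factors with `i = 0`, each of degree `2` in it.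
  have hbound := degreeOf_coeff_prod_le (R := R) (0 : Fin (n + 1)) univ _
    (fun i => ∑ j ∈ Ioi i, if i = 0 then 2 else 0)
    (fun i _ => degreeOf_coeff_prod_le 0 (Ioi i) _ _ fun j hj m =>
      (degreeOf_coeff_X_sub_C_le 0 _ m).trans
        (MvPolynomial.degreeOf_zero_sq_X_sub_X_le (mem_Ioi.1 hj))) k
  refine hbound.trans_eq ?_
  rw [Fintype.sum_eq_single 0 fun i hi => by simp [hi]]
  simp [mul_comm]

variable (R d)

-- Variable `i` stands for the elementary symmetric polynomial `e_(i+1)`.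
noncomputable def sqDiffPolyEsymmCoeff (k : ℕ) : MvPolynomial (Fin d) R :=
  (MvPolynomial.esymmAlgEquiv (Fin d) R (Fintype.card_fin d)).symm
    ⟨(sqDiffPoly R d).coeff k, isSymmetric_coeff_sqDiffPoly k⟩

variable {R d}

theorem esymmAlgHom_sqDiffPolyEsymmCoeff (k : ℕ) :
    (MvPolynomial.esymmAlgHom (Fin d) R d (sqDiffPolyEsymmCoeff R d k)).val =
      (sqDiffPoly R d).coeff k :=
  congrArg Subtype.val ((MvPolynomial.esymmAlgEquiv (Fin d) R _).apply_symm_apply _)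

theorem totalDegree_sqDiffPolyEsymmCoeff_le [Nontrivial R] {n : ℕ} (k : ℕ) :
    (sqDiffPolyEsymmCoeff R (n + 1) k).totalDegree ≤ 2 * n :=
  calc _ ≤ _ := MvPolynomial.totalDegree_le_degreeOf_esymmAlgHom _
    _ ≤ 2 * n := by
      rw [esymmAlgHom_sqDiffPolyEsymmCoeff]
      exact degreeOf_coeff_sqDiffPoly_le k

theorem sqDiffPolyEsymmCoeff_eq_zero {k : ℕ} (hk : (sqDiffPoly R d).natDegree < k) :
    sqDiffPolyEsymmCoeff R d k = 0 := by
  simp only [sqDiffPolyEsymmCoeff, coeff_eq_zero_of_natDegree_lt hk]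
  exact map_zero _

end sqDiffPoly

/-- For each `d ≥ 1` there is a constant `c > 0` such that: if `P ∈ ℤ[X]` has
degree `d`, leading coefficient `a`, complex roots `α_1,…,α_d`, and
coefficients bounded by `H ≥ 1`, then the polynomial
`M(X) = a^{2(d-1)} ∏_{i<j} (X - (α_i - α_j)^2)` has integer coefficients,
all of absolute value at most `c · H^{2(d-1)}`. -/
theorem mahler_auxiliary_polynomial_integer_and_height (d : ℕ) (hd : 1 ≤ d) :
    ∃ c : ℝ, 0 < c ∧
      ∀ (P : Polynomial ℤ) (a : ℤ) (α : Fin d → ℂ) (H : ℝ),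
        P.natDegree = d → P.leadingCoeff = a → a ≠ 0 → 1 ≤ H →
        (∀ i, |(P.coeff i : ℝ)| ≤ H) →
        P.map (Int.castRingHom ℂ) = C (a : ℂ) * ∏ i, (X - C (α i)) →
        ∀ n : ℕ, ∃ z : ℤ,
          (C ((a : ℂ) ^ (2 * (d - 1))) *
            ∏ i : Fin d, ∏ j ∈ Finset.Ioi i,
              (X - C ((α i - α j) ^ 2))).coeff n = (z : ℂ) ∧
          |(z : ℝ)| ≤ c * H ^ (2 * (d - 1)) := by
  obtain ⟨n, rfl⟩ := Nat.exists_eq_add_of_le' hd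
  rw [Nat.add_sub_cancel]
  set Q := sqDiffPolyEsymmCoeff ℤ (n + 1)
  set N := (sqDiffPoly ℤ (n + 1)).natDegree
  set l1 : ℕ → ℝ := fun k => ∑ t ∈ (Q k).support, |(((Q k).coeff t : ℤ) : ℝ)|
  have hl1 : ∀ k, l1 k ≤ ∑ k ∈ range (N + 1), l1 k := by
    intro k
    by_cases hk : k ≤ N
    · exact single_le_sum (fun k _ => by positivity) (mem_range.2 (Nat.lt_succ_of_le hk))
    · simp only [l1, Q, sqDiffPolyEsymmCoeff_eq_zero (not_le.1 hk)]
      simpa using sum_nonneg fun k _ => by positivity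
  refine ⟨1 + ∑ k ∈ range (N + 1), l1 k, by positivity, ?_⟩
  intro P a α H hdeg hlead _ _ hcoeff hmap k
  refine ⟨(Q k).homogenizedEval (2 * n) a fun i => (-1) ^ (i + 1 : ℕ) * P.coeff (n + 1 - (i + 1)),
    ?_, ?_⟩
  · have hmap' : P.map (algebraMap ℤ ℂ) = C (algebraMap ℤ ℂ a) * ∏ i, (X - C (α i)) := by
      rwa [algebraMap_int_eq, eq_intCast]
    have hroots : ∏ i, ∏ j ∈ Ioi i, (X - C ((α i - α j) ^ 2)) =
        (sqDiffPoly ℤ (n + 1)).map (MvPolynomial.aeval α).toRingHom := by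
      simp [map_sqDiffPoly]
    rw [coeff_C_mul, hroots, coeff_map, ← esymmAlgHom_sqDiffPolyEsymmCoeff]
    simpa using algebraMap_pow_mul_aeval_esymmAlgHom hmap' (totalDegree_sqDiffPolyEsymmCoeff_le k)
  · have hcoeffH : ∀ i, |(Int.castRingHom ℝ (P.coeff i))| ≤ H := hcoeff
    have ha : |Int.castRingHom ℝ a| ≤ H := by
      rw [← hlead, leadingCoeff, hdeg]
      exact hcoeffH _
    calc _ ≤ l1 k * H ^ (2 * n) :=
          MvPolynomial.abs_homogenizedEval_le (Int.castRingHom ℝ)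
            (totalDegree_sqDiffPolyEsymmCoeff_le k) ha
            fun i => by simpa using hcoeffH _
      _ ≤ _ := by gcongr; linarith [hl1 k]
end

section
/- For the polynomial P(X,Y) = (-X²/3 + X³/2 + 2X/3 − 1)·Y + X³ − X² + 1 evaluated at Y = √3, all three complex roots of P(X, √3) have absolute value exactly √3 − 1. -/
/-!
Since `s = √3` satisfies `s² = 3`, the cubic factors as
`(s/2 + 1)(X − (s − 1))(X² + (5s/3 − 3)X + (s − 1)²)`. The quadratic factor has real coefficients
and negative discriminant, so its roots are a pair of complex conjugates whose product, the squared
modulus, is the constant term `(s − 1)²`.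
-/

theorem Complex.normSq_eq_of_sq_add_mul_add_eq_zero {b c : ℝ} (hdisc : b ^ 2 < 4 * c) {z : ℂ}
    (hz : z ^ 2 + b * z + c = 0) : Complex.normSq z = c := by
  have hre := congrArg Complex.re hz
  have him := congrArg Complex.im hz
  simp only [sq, Complex.add_re, Complex.add_im, Complex.mul_re, Complex.mul_im,
    Complex.ofReal_re, Complex.ofReal_im, Complex.zero_re, Complex.zero_im] at hre him
  have him' : z.im * (2 * z.re + b) = 0 := by linarith
  rcases mul_eq_zero.mp him' with hy | hx
  · -- a real root would make the discriminant nonnegative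
    rw [hy] at hre
    nlinarith [sq_nonneg (2 * z.re + b)]
  · obtain rfl : b = -2 * z.re := by linarith
    rw [Complex.normSq_apply]
    linarith

theorem cubic_factor_of_sq_eq_three {K : Type*} [Field K] [CharZero K] {s : K} (hs : s ^ 2 = 3)
    (z : K) :
    (s / 2 + 1) * z ^ 3 - (s / 3 + 1) * z ^ 2 + (2 * s / 3) * z + 1 - s
      = (s / 2 + 1) * (z - (s - 1)) * (z ^ 2 + (5 * s / 3 - 3) * z + (s - 1) ^ 2) := by
  linear_combination (s ^ 2 / 2 + s * z / 3 - s / 2 - z ^ 2 / 3 - 2 * z / 3) * hs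

/-- Every complex root of
`P(X,√3) = (√3/2 + 1)X³ − (√3/3 + 1)X² + (2√3/3)X + 1 − √3`
has absolute value exactly `√3 − 1`. -/
theorem cubic_roots_abs_sqrt3_sub_one (z : ℂ)
    (hz : ((Real.sqrt 3 : ℂ) / 2 + 1) * z ^ 3
        - ((Real.sqrt 3 : ℂ) / 3 + 1) * z ^ 2
        + (2 * (Real.sqrt 3 : ℂ) / 3) * z + 1 - (Real.sqrt 3 : ℂ) = 0) :
    ‖z‖ = Real.sqrt 3 - 1 := by
  set s := Real.sqrt 3
  have hs : s ^ 2 = 3 := Real.sq_sqrt (by norm_num)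
  have hs1 : 1 < s := by nlinarith [Real.sqrt_nonneg 3]
  have hsC : (s : ℂ) ^ 2 = 3 := by exact_mod_cast hs
  rw [cubic_factor_of_sq_eq_three hsC] at hz
  have hlead : (s : ℂ) / 2 + 1 ≠ 0 := by exact_mod_cast (by positivity : s / 2 + 1 ≠ 0)
  rcases mul_eq_zero.mp hz with hlin | hquad
  · have hz' : z = ((s - 1 : ℝ) : ℂ) := by
      push_cast
      exact sub_eq_zero.mp ((mul_eq_zero.mp hlin).resolve_left hlead)
    rw [hz', Complex.norm_real, Real.norm_of_nonneg (by linarith)]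
  · have hquad' : z ^ 2 + ((5 * s / 3 - 3 : ℝ) : ℂ) * z + ((s - 1) ^ 2 : ℝ) = 0 := by
      push_cast
      exact hquad
    have hdisc : (5 * s / 3 - 3) ^ 2 < 4 * (s - 1) ^ 2 := by nlinarith
    rw [Complex.norm_def, Complex.normSq_eq_of_sq_add_mul_add_eq_zero hdisc hquad',
      Real.sqrt_sq (by linarith)]
end

section
/- Suppose a cubic polynomial a_3X³ + a_2X² + a_1X + a_0 with real coefficients and a_3 ≠ 0 has simple roots all of the same nonzero absolute value. Then a_1³ a_3 = a_0 a_2³. -/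
/-!
By Vieta, `a₂ = -a₃e₁`, `a₁ = a₃e₂`, `a₀ = -a₃e₃` for the elementary symmetric functions `eᵢ` of
the roots, so the `eᵢ` are real. On the circle `|z| = r` conjugation is `z ↦ r²/z`, hence
`e₂ = conj e₂ = r⁴e₁/e₃` and `e₃ = conj e₃ = r⁶/e₃`. Then `e₂³e₃³ = r¹²e₁³ = e₃⁴e₁³`, i.e.
`e₂³ = e₁³e₃`, which is the claimed relation after substituting Vieta.
-/

open ComplexConjugate

theorem cubic_vieta_of_distinct_roots {R : Type*} [CommRing R] [IsDomain R]
    {a₀ a₁ a₂ a₃ z₁ z₂ z₃ : R} (h12 : z₁ ≠ z₂) (h13 : z₁ ≠ z₃) (h23 : z₂ ≠ z₃)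
    (hr1 : a₃ * z₁ ^ 3 + a₂ * z₁ ^ 2 + a₁ * z₁ + a₀ = 0)
    (hr2 : a₃ * z₂ ^ 3 + a₂ * z₂ ^ 2 + a₁ * z₂ + a₀ = 0)
    (hr3 : a₃ * z₃ ^ 3 + a₂ * z₃ ^ 2 + a₁ * z₃ + a₀ = 0) :
    a₂ = -a₃ * (z₁ + z₂ + z₃) ∧ a₁ = a₃ * (z₁ * z₂ + z₁ * z₃ + z₂ * z₃) ∧
      a₀ = -a₃ * (z₁ * z₂ * z₃) := by
  -- Divided differences of the cubic vanish on pairs of distinct roots.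
  have d12 : a₃ * (z₁ ^ 2 + z₁ * z₂ + z₂ ^ 2) + a₂ * (z₁ + z₂) + a₁ = 0 :=
    eq_zero_of_ne_zero_of_mul_left_eq_zero (sub_ne_zero.mpr h12) (by linear_combination hr1 - hr2)
  have d13 : a₃ * (z₁ ^ 2 + z₁ * z₃ + z₃ ^ 2) + a₂ * (z₁ + z₃) + a₁ = 0 :=
    eq_zero_of_ne_zero_of_mul_left_eq_zero (sub_ne_zero.mpr h13) (by linear_combination hr1 - hr3)
  have d123 : a₃ * (z₁ + z₂ + z₃) + a₂ = 0 :=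
    eq_zero_of_ne_zero_of_mul_left_eq_zero (sub_ne_zero.mpr h23) (by linear_combination d12 - d13)
  have he₁ : a₂ = -a₃ * (z₁ + z₂ + z₃) := by linear_combination d123
  have he₂ : a₁ = a₃ * (z₁ * z₂ + z₁ * z₃ + z₂ * z₃) := by
    linear_combination d12 - (z₁ + z₂) * d123
  exact ⟨he₁, he₂, by linear_combination hr1 - z₁ * he₂ - z₁ ^ 2 * he₁⟩

theorem Complex.conj_eq_self_of_ofReal_mul_eq_ofReal {a b : ℝ} {w : ℂ} (ha : a ≠ 0)
    (h : (a : ℂ) * w = b) : conj w = w := by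
  have hw : w = b / a := by rw [eq_div_iff (Complex.ofReal_ne_zero.mpr ha), mul_comm, h]
  rw [hw, map_div₀, Complex.conj_ofReal, Complex.conj_ofReal]

section StarRing

variable {R : Type*} [CommRing R] [StarRing R] {z₁ z₂ z₃ c : R}

theorem esymm_relations_of_mul_star_eq
    (hz₁ : z₁ * star z₁ = c) (hz₂ : z₂ * star z₂ = c) (hz₃ : z₃ * star z₃ = c)
    (he₂ : star (z₁ * z₂ + z₁ * z₃ + z₂ * z₃) = z₁ * z₂ + z₁ * z₃ + z₂ * z₃)
    (he₃ : star (z₁ * z₂ * z₃) = z₁ * z₂ * z₃) :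
    (z₁ * z₂ + z₁ * z₃ + z₂ * z₃) * (z₁ * z₂ * z₃) = c ^ 2 * (z₁ + z₂ + z₃) ∧
      (z₁ * z₂ * z₃) ^ 2 = c ^ 3 := by
  -- `star zᵢ` acts as `c / zᵢ`, so `e₃ * star e₂ = c² e₁` and `e₃ * star e₃ = c³`.
  simp only [star_add, star_mul'] at he₂ he₃
  constructor
  · linear_combination z₃ * z₂ * star z₂ * hz₁ + c * z₃ * hz₂ + z₂ * z₃ * star z₃ * hz₁
      + c * z₂ * hz₃ + z₁ * z₃ * star z₃ * hz₂ + c * z₁ * hz₃ - z₁ * z₂ * z₃ * he₂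
  · linear_combination z₂ * star z₂ * z₃ * star z₃ * hz₁ + c * z₃ * star z₃ * hz₂
      + c ^ 2 * hz₃ - z₁ * z₂ * z₃ * he₃

end StarRing

theorem cube_eq_cube_mul_of_mul_eq_of_sq_eq {R : Type*} [CommRing R] [IsDomain R]
    {e₁ e₂ e₃ c : R} (hc : c ≠ 0) (h₂ : e₂ * e₃ = c ^ 2 * e₁) (h₃ : e₃ ^ 2 = c ^ 3) :
    e₂ ^ 3 = e₁ ^ 3 * e₃ := by
  have he₃ : e₃ ^ 3 ≠ 0 := pow_ne_zero 3 fun h ↦ pow_ne_zero 3 hc (by rw [← h₃, h, sq, zero_mul])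
  apply mul_right_cancel₀ he₃
  linear_combination (e₂ ^ 2 * e₃ ^ 2 + e₂ * e₃ * c ^ 2 * e₁ + c ^ 4 * e₁ ^ 2) * h₂
    - e₁ ^ 3 * (e₃ ^ 2 + c ^ 3) * h₃

/-- If a real cubic `a₃X³ + a₂X² + a₁X + a₀` (with `a₃ ≠ 0`) has three distinct
complex roots, all of the same nonzero absolute value, then
`a₁³a₃ = a₀a₂³`. -/
theorem cubic_equal_abs_roots_coeff_relation
    (a₀ a₁ a₂ a₃ : ℝ) (ha₃ : a₃ ≠ 0)
    (z₁ z₂ z₃ : ℂ)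
    (h12 : z₁ ≠ z₂) (h13 : z₁ ≠ z₃) (h23 : z₂ ≠ z₃)
    (hr1 : (a₃ : ℂ) * z₁ ^ 3 + (a₂ : ℂ) * z₁ ^ 2 + (a₁ : ℂ) * z₁ + a₀ = 0)
    (hr2 : (a₃ : ℂ) * z₂ ^ 3 + (a₂ : ℂ) * z₂ ^ 2 + (a₁ : ℂ) * z₂ + a₀ = 0)
    (hr3 : (a₃ : ℂ) * z₃ ^ 3 + (a₂ : ℂ) * z₃ ^ 2 + (a₁ : ℂ) * z₃ + a₀ = 0)
    (habs12 : ‖z₁‖ = ‖z₂‖)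
    (habs13 : ‖z₁‖ = ‖z₃‖)
    (habsne : ‖z₁‖ ≠ 0) :
    a₁ ^ 3 * a₃ = a₀ * a₂ ^ 3 := by
  obtain ⟨he₁, he₂, he₃⟩ := cubic_vieta_of_distinct_roots h12 h13 h23 hr1 hr2 hr3
  have hcircle (z : ℂ) (hz : ‖z‖ = ‖z₁‖) : z * conj z = (‖z₁‖ : ℂ) ^ 2 := by
    rw [← hz, Complex.mul_conj']
  have he₂_real := Complex.conj_eq_self_of_ofReal_mul_eq_ofReal ha₃ he₂.symm
  have he₃_real := Complex.conj_eq_self_of_ofReal_mul_eq_ofReal (b := -a₀) (w := z₁ * z₂ * z₃)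
    ha₃ (by push_cast; linear_combination he₃)
  obtain ⟨hrel₂, hrel₃⟩ := esymm_relations_of_mul_star_eq (hcircle z₁ rfl)
    (hcircle z₂ habs12.symm) (hcircle z₃ habs13.symm) he₂_real he₃_real
  have hcube := cube_eq_cube_mul_of_mul_eq_of_sq_eq
    (pow_ne_zero 2 (Complex.ofReal_ne_zero.mpr habsne)) hrel₂ hrel₃
  have hC : (a₁ : ℂ) ^ 3 * a₃ = a₀ * a₂ ^ 3 := by
    rw [he₁, he₂, he₃]
    linear_combination (a₃ : ℂ) ^ 4 * hcube
  exact_mod_cast hC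
end

section
/- Let P(X,Y) = (-X²/3 + X³/2 + 2X/3 − 1)Y + X³ − X² + 1. For small real ε, the real root of P(X, √3 + ε) (near √3 − 1) and the absolute value of the complex conjugate roots both equal √3 − 1 + (2 − √3)ε + O(ε²); in particular the difference between the absolute value of the real root and that of the complex roots is O(ε²). -/
/-!
Put `x₀(ε) = √3 - 1 + (2 - √3) ε`. Modulo `√3 ^ 2 = 3`, both `P(x₀ + ε², √3 + ε)` and
`P(x₀ - ε², √3 + ε)` are `ε²` times a polynomial in `ε` whose constant term,
`(109 - 55√3)/6 > 0` resp. `(73 - 47√3)/6 < 0`, decides its sign for small `ε`; the intermediate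
value theorem then gives a real root `x` with `|x - x₀| ≤ ε²`. Dividing `P(X, t)` by `X - x`
leaves a real quadratic with negative discriminant, so the other two roots `z, z̄` are non-real
and, by Vieta, `x ‖z‖² = (t - 1)/(t/2 + 1)`. As `x₀³` agrees with this product of the roots up
to `O(ε²)` and `x = x₀ + O(ε²)`, also `‖z‖ = x₀ + O(ε²)`.
-/

open Real

theorem abs_sub_le_div_of_abs_sq_sub_le {r y η : ℝ} (hr : 0 ≤ r) (hy : 0 < y)
    (h : |r ^ 2 - y ^ 2| ≤ η) : |r - y| ≤ η / y := by
  rw [le_div_iff₀ hy]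
  calc |r - y| * y ≤ |r - y| * (r + y) := by gcongr; linarith
    _ = |r ^ 2 - y ^ 2| := by
      rw [sq_sub_sq, abs_mul, abs_of_nonneg (by linarith : 0 ≤ r + y), mul_comm]
    _ ≤ η := h

theorem abs_sub_le_of_mul_sq_eq_pow_three_add {x y r δ : ℝ} (hx : 0 < x) (hy : 0 < y)
    (hr : 0 ≤ r) (h : x * r ^ 2 = y ^ 3 + δ) :
    |r - y| ≤ (|δ| + y ^ 2 * |x - y|) / (x * y) := by
  have key : x * (r ^ 2 - y ^ 2) = δ - y ^ 2 * (x - y) := by linear_combination h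
  have hsq : |r ^ 2 - y ^ 2| ≤ (|δ| + y ^ 2 * |x - y|) / x := by
    rw [le_div_iff₀ hx, mul_comm, ← abs_of_pos hx, ← abs_mul, key, abs_of_pos hx]
    refine (abs_sub _ _).trans_eq ?_
    rw [abs_mul, abs_sq]
  rw [← div_div]
  exact abs_sub_le_div_of_abs_sq_sub_le hr hy hsq

open Complex in
theorem Complex.exists_nonreal_quadratic_root_of_discrim_neg {a b c : ℝ} (ha : 0 < a)
    (h : discrim a b c < 0) :
    ∃ z : ℂ, a * z ^ 2 + b * z + c = 0 ∧ z.im ≠ 0 ∧ ‖z‖ ^ 2 = c / a := by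
  set w := √(-discrim a b c)
  have hw2 : w ^ 2 = -discrim a b c := sq_sqrt (neg_pos.2 h).le
  have hdisc : discrim (a : ℂ) b c = (w * I) * (w * I) := by
    have : (w : ℂ) ^ 2 = -discrim (a : ℂ) b c := by
      rw [← ofReal_pow, hw2]; simp [discrim]
    linear_combination this - (w : ℂ) ^ 2 * I_sq
  have hz : (-b + w * I) / (2 * a) = ⟨-b / (2 * a), w / (2 * a)⟩ := by
    rw [mk_eq_add_mul_I]; push_cast; field_simp
  refine ⟨(-b + w * I) / (2 * a), ?_, ?_, ?_⟩
  · rw [sq, quadratic_eq_zero_iff (ofReal_ne_zero.2 ha.ne') hdisc]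
    exact Or.inl rfl
  · rw [hz]
    exact (div_pos (sqrt_pos.2 (neg_pos.2 h)) (by positivity)).ne'
  · rw [hz, Complex.sq_norm, normSq_mk, ← sq, ← sq, div_pow, div_pow, hw2, discrim]
    field_simp
    ring

def cubicP {K : Type*} [Field K] (x t : K) : K :=
  (-(x ^ 2) / 3 + x ^ 3 / 2 + 2 * x / 3 - 1) * t + x ^ 3 - x ^ 2 + 1

theorem exists_nonreal_cubicP_root {x t : ℝ} (ht : t ∈ Set.Icc 1.7 1.8)
    (hx : x ∈ Set.Icc 0.6 0.8) (h : cubicP x t = 0) :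
    ∃ z : ℂ, cubicP z t = 0 ∧ z.im ≠ 0 ∧ x * ‖z‖ ^ 2 = (t - 1) / (t / 2 + 1) := by
  obtain ⟨ht_lo, ht_hi⟩ := ht
  obtain ⟨hx_lo, hx_hi⟩ := hx
  -- `cubicP X t = (X - x) * (a X ^ 2 + b X + c)` for the coefficients `a`, `b`, `c` below;
  -- `c x = t - 1` is the vanishing of the remainder.
  have hcx : (((t / 2 + 1) * x - t / 3 - 1) * x + 2 * t / 3) * x = t - 1 := by
    unfold cubicP at h; linear_combination h
  have hdisc : discrim (t / 2 + 1) ((t / 2 + 1) * x - t / 3 - 1)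
      (((t / 2 + 1) * x - t / 3 - 1) * x + 2 * t / 3) < 0 := by
    have hc : 0.85 ≤ ((t / 2 + 1) * x - t / 3 - 1) * x + 2 * t / 3 := by nlinarith
    have hb : |(t / 2 + 1) * x - t / 3 - 1| ≤ 1 := abs_le.2 ⟨by nlinarith, by nlinarith⟩
    have hb2 := (sq_le_one_iff_abs_le_one _).2 hb
    unfold discrim; nlinarith
  obtain ⟨z, hz, him, hnorm⟩ :=
    Complex.exists_nonreal_quadratic_root_of_discrim_neg (by linarith) hdisc
  refine ⟨z, ?_, him, ?_⟩
  · have hxC : cubicP (x : ℂ) t = 0 := by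
      unfold cubicP at h ⊢; exact_mod_cast h
    unfold cubicP at hxC ⊢
    push_cast at hz
    linear_combination (z - x) * hz + hxC
  · rw [hnorm, ← hcx]
    ring

theorem sqrt_three_bounds : 1.732 < √3 ∧ √3 < 1.7321 := by
  constructor
  · rw [lt_sqrt (by norm_num)]; norm_num
  · rw [sqrt_lt' (by norm_num)]; norm_num

theorem sqrt_three_sq : √3 ^ 2 = 3 := sq_sqrt (by norm_num)

theorem sqrt_three_pow_three : √3 ^ 3 = 3 * √3 := by rw [pow_succ, sqrt_three_sq]

theorem sqrt_three_pow_four : √3 ^ 4 = 9 := by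
  rw [show 4 = 2 * 2 from rfl, pow_mul, sqrt_three_sq]; norm_num

noncomputable def rootApprox (ε : ℝ) : ℝ := √3 - 1 + (2 - √3) * ε

theorem rootApprox_mem_Icc {ε : ℝ} (hε : |ε| ≤ 1 / 100) :
    rootApprox ε ∈ Set.Icc 0.72 0.74 := by
  obtain ⟨hs_lo, hs_hi⟩ := sqrt_three_bounds
  obtain ⟨hε_lo, hε_hi⟩ := abs_le.1 hε
  constructor <;> unfold rootApprox <;> nlinarith

theorem cubicP_rootApprox_add_sq (ε : ℝ) : cubicP (rootApprox ε + ε ^ 2) (√3 + ε) =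
    ε ^ 2 * ((109 - 55 * √3) / 6 + ε * ((-150 + 95 * √3) / 6 + ε * ((1 + 11 * √3) / 6
      + ε * ((61 - 27 * √3) / 6 + ε * (4 - √3 + ε / 2))))) := by
  unfold cubicP rootApprox
  ring_nf
  simp only [sqrt_three_sq, sqrt_three_pow_three, sqrt_three_pow_four]
  ring

theorem cubicP_rootApprox_sub_sq (ε : ℝ) : cubicP (rootApprox ε - ε ^ 2) (√3 + ε) =
    ε ^ 2 * ((73 - 47 * √3) / 6 + ε * ((-178 + 95 * √3) / 6 + ε * ((161 - 87 * √3) / 6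
      + ε * ((-65 + 45 * √3) / 6 + ε * (2 - 2 * √3 - ε / 2))))) := by
  unfold cubicP rootApprox
  ring_nf
  simp only [sqrt_three_sq, sqrt_three_pow_three, sqrt_three_pow_four]
  ring

theorem exists_cubicP_root_near_rootApprox {ε : ℝ} (hε : |ε| ≤ 1 / 100) :
    ∃ x, cubicP x (√3 + ε) = 0 ∧ |x - rootApprox ε| ≤ ε ^ 2 := by
  obtain ⟨hs_lo, hs_hi⟩ := sqrt_three_bounds
  obtain ⟨hε_lo, hε_hi⟩ := abs_le.1 hε
  have hε4 := mul_nonneg (mul_nonneg (sq_nonneg ε) (sq_nonneg ε)) (sub_nonneg.2 hε_hi)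
  have h_neg : cubicP (rootApprox ε - ε ^ 2) (√3 + ε) ≤ 0 := by
    rw [cubicP_rootApprox_sub_sq]
    refine mul_nonpos_of_nonneg_of_nonpos (sq_nonneg ε) ?_
    nlinarith [sq_nonneg ε, sq_nonneg (ε ^ 2)]
  have h_pos : 0 ≤ cubicP (rootApprox ε + ε ^ 2) (√3 + ε) := by
    rw [cubicP_rootApprox_add_sq]
    refine mul_nonneg (sq_nonneg ε) ?_
    nlinarith [sq_nonneg ε, sq_nonneg (ε ^ 2)]
  have hcont : Continuous fun x => cubicP x (√3 + ε) := by unfold cubicP; fun_prop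
  obtain ⟨x, ⟨hx_lo, hx_hi⟩, hroot⟩ := intermediate_value_Icc
    (by linarith [sq_nonneg ε]) hcont.continuousOn ⟨h_neg, h_pos⟩
  exact ⟨x, hroot, abs_sub_le_iff.2 ⟨by linarith, by linarith⟩⟩

theorem sqrt_three_add_sub_one_sub_mul_rootApprox_pow_three (ε : ℝ) :
    √3 + ε - 1 - ((√3 + ε) / 2 + 1) * rootApprox ε ^ 3 =
      ε ^ 2 * ((-27 + 15 * √3) / 2 + ε * ((50 - 29 * √3) / 2 + ε * (-13 + 15 * √3 / 2))) := by
  unfold rootApprox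
  ring_nf
  simp only [sqrt_three_sq, sqrt_three_pow_three, sqrt_three_pow_four]
  ring

theorem abs_div_sub_rootApprox_pow_three_le {ε : ℝ} (hε : |ε| ≤ 1 / 100) :
    |(√3 + ε - 1) / ((√3 + ε) / 2 + 1) - rootApprox ε ^ 3| ≤ 0.4 * ε ^ 2 := by
  obtain ⟨hs_lo, hs_hi⟩ := sqrt_three_bounds
  obtain ⟨hε_lo, hε_hi⟩ := abs_le.1 hε
  rw [div_sub' (by linarith), sqrt_three_add_sub_one_sub_mul_rootApprox_pow_three, abs_div,
    abs_mul, abs_sq, abs_of_pos (by linarith : (0 : ℝ) < (√3 + ε) / 2 + 1),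
    div_le_iff₀ (by linarith)]
  have hG : |(-27 + 15 * √3) / 2 + ε * ((50 - 29 * √3) / 2 + ε * (-13 + 15 * √3 / 2))| ≤ 0.6 :=
    abs_le.2 ⟨by nlinarith [mul_nonneg (sq_nonneg ε) (sub_nonneg.2 hs_lo.le)],
      by nlinarith [mul_nonneg (sq_nonneg ε) (sub_nonneg.2 hs_hi.le)]⟩
  nlinarith [sq_nonneg ε]

theorem abs_sub_rootApprox_le_of_mul_sq_eq {ε x r : ℝ} (hε : |ε| ≤ 1 / 100)
    (hx : |x - rootApprox ε| ≤ ε ^ 2) (hr : 0 ≤ r)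
    (h : x * r ^ 2 = (√3 + ε - 1) / ((√3 + ε) / 2 + 1)) :
    |r - rootApprox ε| ≤ 2 * ε ^ 2 := by
  obtain ⟨hx0_lo, hx0_hi⟩ := rootApprox_mem_Icc hε
  have hε2 : ε ^ 2 ≤ 1 / 10000 := by nlinarith [abs_le.1 hε]
  have hx_lo : 0.71 ≤ x := by linarith [(abs_le.1 hx).1]
  have hδ := abs_div_sub_rootApprox_pow_three_le hε
  calc |r - rootApprox ε|
      ≤ (|(√3 + ε - 1) / ((√3 + ε) / 2 + 1) - rootApprox ε ^ 3|
          + rootApprox ε ^ 2 * |x - rootApprox ε|) / (x * rootApprox ε) :=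
        abs_sub_le_of_mul_sq_eq_pow_three_add (by linarith) (by linarith) hr (by rw [h]; ring)
    _ ≤ (0.4 * ε ^ 2 + 0.74 ^ 2 * ε ^ 2) / (0.71 * 0.72) := by gcongr
    _ ≤ 2 * ε ^ 2 := by rw [div_le_iff₀ (by norm_num)]; nlinarith [sq_nonneg ε]

/-- For `P(X,Y) = (-X²/3 + X³/2 + 2X/3 − 1)Y + X³ − X² + 1` and small real
`ε`, the real root of `P(X, √3 + ε)` near `√3 − 1` and the common absolute
value of the complex conjugate roots both equal
`√3 − 1 + (2 − √3)ε + O(ε²)`; in particular the difference between the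
absolute value of the real root and that of the complex roots is `O(ε²)`. -/
theorem perturbed_cubic_roots_expansion :
    ∃ C : ℝ, 0 < C ∧ ∃ δ : ℝ, 0 < δ ∧ ∀ ε : ℝ, |ε| < δ →
      ∃ (x : ℝ) (z : ℂ),
        (-(x ^ 2) / 3 + x ^ 3 / 2 + 2 * x / 3 - 1) * (Real.sqrt 3 + ε)
            + x ^ 3 - x ^ 2 + 1 = 0 ∧
        (-(z ^ 2) / 3 + z ^ 3 / 2 + 2 * z / 3 - 1) * ((Real.sqrt 3 + ε : ℝ) : ℂ)
            + z ^ 3 - z ^ 2 + 1 = 0 ∧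
        z.im ≠ 0 ∧
        |x - (Real.sqrt 3 - 1 + (2 - Real.sqrt 3) * ε)| ≤ C * ε ^ 2 ∧
        |‖z‖ - (Real.sqrt 3 - 1 + (2 - Real.sqrt 3) * ε)| ≤ C * ε ^ 2 ∧
        |(|x| - ‖z‖)| ≤ C * ε ^ 2 := by
  refine ⟨3, by norm_num, 1 / 100, by norm_num, fun ε hε => ?_⟩
  rw [show √3 - 1 + (2 - √3) * ε = rootApprox ε from rfl]
  obtain ⟨hs_lo, hs_hi⟩ := sqrt_three_bounds
  obtain ⟨hε_lo, hε_hi⟩ := abs_le.1 hε.le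
  obtain ⟨hx0_lo, hx0_hi⟩ := rootApprox_mem_Icc hε.le
  have hε2 : ε ^ 2 ≤ 1 / 10000 := by nlinarith
  obtain ⟨x, hx, hx_near⟩ := exists_cubicP_root_near_rootApprox hε.le
  obtain ⟨hx_lo, hx_hi⟩ := abs_le.1 hx_near
  obtain ⟨z, hz, him, hvieta⟩ := exists_nonreal_cubicP_root
    ⟨by linarith, by linarith⟩ ⟨by linarith, by linarith⟩ hx
  have hz_near := abs_sub_rootApprox_le_of_mul_sq_eq hε.le hx_near (norm_nonneg z) hvieta
  refine ⟨x, z, hx, hz, him, by linarith [sq_nonneg ε], by linarith [sq_nonneg ε], ?_⟩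
  rw [abs_of_pos (by linarith : 0 < x)]
  calc |x - ‖z‖| ≤ |x - rootApprox ε| + |rootApprox ε - ‖z‖| := abs_sub_le _ _ _
    _ ≤ 3 * ε ^ 2 := by rw [abs_sub_comm] at hz_near; linarith
end

section
/- For the degree-4 polynomial P_M(X) = M(X⁴ − 1) − (X³ − X² + X − 5) with M a positive integer tending to infinity, the root z_1 near 1 satisfies z_1 = 1 − 1/M − 2/M² − 11/(2M³) − 71/(4M⁴) + O(1/M⁵), the root z_i near i satisfies z_i = i − i/M − (1+4i)/(2M²) − (4+11i)/(2M³) − (66+143i)/(8M⁴) + O(1/M⁵), and |z_1| − |z_i| = O(1/M⁵) while being nonzero for large M; hence the absolute separation of P_M is O(H(P_M)^{-5}) with H(P_M) = M. -/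
/-!
With `u = 1/M` the roots of `P_M` are those of `X⁴ - 1 - u (X³ - X² + X - 5)`. Substituting the
fifth-order expansions `a₁(u)` near `1` and `aᵢ(u)` near `i` leaves a residual `O(u⁶)`, while the
derivative there stays close to `4`. Since `p'(a) / p(a) = ∑ 1 / (a - z)` over the roots `z` of `p`,
some root lies within `deg p · ‖p(a) / p'(a)‖ = O(u⁶)` of `a`. Finally
`‖aᵢ‖² - ‖a₁‖² = (5/4) u⁵ + O(u⁶)`, so the moduli of the two roots differ by `(5/8) u⁵ + O(u⁶)`.
-/

open Polynomial Complex Filter Topology Asymptotics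

theorem isBigO_pow_of_eq_pow_mul {n : ℕ} {f g : ℝ → ℂ} (hg : ContinuousAt g 0)
    (hfg : ∀ u, f u = u ^ n * g u) : f =O[𝓝 0] fun u => u ^ n := by
  have h : (fun u : ℝ => (u : ℂ) ^ n) =O[𝓝 0] fun u => u ^ n := isBigO_of_le _ fun u => by simp
  simpa only [mul_one, ← hfg] using h.mul (hg.tendsto.isBigO_one ℝ)

noncomputable def quarticFamily (u : ℂ) : ℂ[X] := X ^ 4 - 1 - C u * (X ^ 3 - X ^ 2 + X - 5)

theorem eval_quarticFamily (u z : ℂ) :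
    (quarticFamily u).eval z = z ^ 4 - 1 - u * (z ^ 3 - z ^ 2 + z - 5) := by
  simp [quarticFamily]

theorem natDegree_quarticFamily (u : ℂ) : (quarticFamily u).natDegree = 4 := by
  unfold quarticFamily; compute_degree!

theorem eval_derivative_quarticFamily (u z : ℂ) :
    (quarticFamily u).derivative.eval z = 4 * z ^ 3 - u * (3 * z ^ 2 - 2 * z + 1) := by
  simp [quarticFamily]; ring

theorem Polynomial.exists_isRoot_norm_sub_mul_norm_eval_derivative_le {K : Type*} [NormedField K]
    [IsAlgClosed K] (p : K[X]) (hp : 0 < p.natDegree) (a : K) :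
    ∃ z, p.IsRoot z ∧ ‖a - z‖ * ‖p.derivative.eval a‖ ≤ p.natDegree * ‖p.eval a‖ := by
  classical
  by_cases ha : p.eval a = 0
  · exact ⟨a, ha, by simp [ha]⟩
  have hs := IsAlgClosed.splits p
  have hne : p.roots.toFinset.Nonempty := by
    rw [Multiset.toFinset_nonempty, ← Multiset.card_pos, ← hs.natDegree_eq_card_roots]
    exact hp
  obtain ⟨z, hz, hmin⟩ := p.roots.toFinset.exists_min_image (fun w => ‖a - w‖) hne
  rw [Multiset.mem_toFinset] at hz
  have hz0 : 0 < ‖a - z‖ :=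
    norm_pos_iff.mpr (sub_ne_zero.mpr fun h => ha (h ▸ (mem_roots'.mp hz).2))
  refine ⟨z, (mem_roots'.mp hz).2, ?_⟩
  have hsum : ‖(p.roots.map fun w => 1 / (a - w)).sum‖ ≤ p.natDegree * (1 / ‖a - z‖) :=
    calc ‖(p.roots.map fun w => 1 / (a - w)).sum‖
        ≤ (p.roots.map fun w => ‖1 / (a - w)‖).sum := by
          simpa [Multiset.map_map] using norm_multiset_sum_le (p.roots.map fun w => 1 / (a - w))
      _ ≤ (p.roots.map fun _ => 1 / ‖a - z‖).sum := by
          refine Multiset.sum_map_le_sum_map _ _ fun w hw => ?_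
          rw [norm_div, norm_one]
          exact one_div_le_one_div_of_le hz0 (hmin w (Multiset.mem_toFinset.mpr hw))
      _ = p.natDegree * (1 / ‖a - z‖) := by simp [hs.natDegree_eq_card_roots]
  rw [hs.eval_derivative_eq_eval_mul_sum ha, norm_mul]
  calc ‖a - z‖ * (‖p.eval a‖ * ‖(p.roots.map fun w => 1 / (a - w)).sum‖)
      ≤ ‖a - z‖ * (‖p.eval a‖ * (p.natDegree * (1 / ‖a - z‖))) := by gcongr
    _ = p.natDegree * ‖p.eval a‖ := by field_simp

theorem exists_root_quarticFamily_near {a : ℝ → ℂ} (ha : ContinuousAt a 0) (ha0 : ‖a 0‖ = 1)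
    (hres : (fun u : ℝ => (quarticFamily u).eval (a u)) =O[𝓝 0] fun u => u ^ 6) :
    ∃ K > 0, ∀ᶠ u : ℝ in 𝓝 0, ∃ z, (quarticFamily u).IsRoot z ∧ ‖z - a u‖ ≤ K * u ^ 6 := by
  obtain ⟨c, hc, hbound⟩ := hres.exists_pos
  have hderiv : ∀ᶠ u : ℝ in 𝓝 0, 2 < ‖(quarticFamily u).derivative.eval (a u)‖ := by
    simp only [eval_derivative_quarticFamily]
    refine ContinuousAt.eventually_lt (f := fun _ => (2 : ℝ)) (by fun_prop) (by fun_prop) ?_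
    norm_num [ha0]
  refine ⟨2 * c, by positivity, ?_⟩
  filter_upwards [hbound.bound, hderiv] with u hres hderiv
  obtain ⟨z, hz, hle⟩ := (quarticFamily u).exists_isRoot_norm_sub_mul_norm_eval_derivative_le
    (by rw [natDegree_quarticFamily]; norm_num) (a u)
  rw [natDegree_quarticFamily, Nat.cast_ofNat] at hle
  rw [Real.norm_of_nonneg (by positivity)] at hres
  refine ⟨z, hz, ?_⟩
  rw [norm_sub_rev]
  nlinarith [norm_nonneg (a u - z)]

-- The `u⁵` terms, absent from the expansions in the statement, push the residual down to
-- `O(u⁶)`, below the size `u⁵` of the gap between the moduli.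
noncomputable def rootNearOne (u : ℝ) : ℝ :=
  1 - u - 2 * u ^ 2 - 11 / 2 * u ^ 3 - 71 / 4 * u ^ 4 - 501 / 8 * u ^ 5

noncomputable def rootNearI (u : ℝ) : ℂ :=
  (-(1 / 2) * u ^ 2 - 2 * u ^ 3 - 33 / 4 * u ^ 4 - 71 / 2 * u ^ 5 : ℝ) +
    (1 - u - 2 * u ^ 2 - 11 / 2 * u ^ 3 - 143 / 8 * u ^ 4 - 505 / 8 * u ^ 5 : ℝ) * I

theorem isBigO_eval_quarticFamily_rootNearOne :
    (fun u : ℝ => (quarticFamily u).eval (rootNearOne u : ℂ)) =O[𝓝 0] fun u => u ^ 6 := by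
  refine isBigO_pow_of_eq_pow_mul (g := fun u : ℝ => 3739 / 4 + 1413 / 4 * (u : ℂ)
    - 397 / 4 * u ^ 2 - 11653 / 4 * u ^ 3 - 555351 / 32 * u ^ 4 - 2738819 / 32 * u ^ 5
    - 4411375 / 64 * u ^ 6 - 919017 / 64 * u ^ 7 + 20181817 / 64 * u ^ 8
    + 404361911 / 256 * u ^ 9 + 2566188551 / 512 * u ^ 10 + 254727939 / 32 * u ^ 11
    + 6562421145 / 512 * u ^ 12 + 8928356571 / 512 * u ^ 13 + 63001502001 / 4096 * u ^ 14)
    (by fun_prop) fun u => ?_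
  rw [eval_quarticFamily, rootNearOne]
  push_cast
  ring

theorem isBigO_eval_quarticFamily_rootNearI :
    (fun u : ℝ => (quarticFamily u).eval (rootNearI u)) =O[𝓝 0] fun u => u ^ 6 := by
  refine isBigO_pow_of_eq_pow_mul (g := fun u : ℝ => 936 + 615 * (u : ℂ) + 15713 / 32 * u ^ 2
    - 60365 / 64 * u ^ 3 - 312979 / 32 * u ^ 4 - 6873165 / 128 * u ^ 5 - 2298415 / 32 * u ^ 6
    - 24905281 / 256 * u ^ 7 - 19520097 / 128 * u ^ 8 - 44227583 / 128 * u ^ 9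
    - 4722726839 / 4096 * u ^ 10 - 2936051401 / 1024 * u ^ 11 - 13464561361 / 2048 * u ^ 12
    - 11885838481 / 1024 * u ^ 13 - 51872637439 / 4096 * u ^ 14
    + (-1253 / 2 - 593 / 4 * u + 3615 / 8 * u ^ 2 + 264549 / 64 * u ^ 3
      + 1491839 / 64 * u ^ 4 + 7542509 / 64 * u ^ 5 + 16918755 / 128 * u ^ 6
      + 59369405 / 512 * u ^ 7 - 123738721 / 512 * u ^ 8 - 1004708679 / 512 * u ^ 9
      - 1849708327 / 256 * u ^ 10 - 6278648271 / 512 * u ^ 11 - 10259629215 / 512 * u ^ 12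
      - 14115407119 / 512 * u ^ 13 - 6252000495 / 256 * u ^ 14) * I)
    (by fun_prop) fun u => ?_
  rw [eval_quarticFamily, rootNearI]
  push_cast
  ring_nf
  simp only [I_sq, I_pow_three, I_pow_four]
  ring

theorem norm_rootNearI_sq_sub_norm_rootNearOne_sq (u : ℝ) :
    ‖rootNearI u‖ ^ 2 - ‖(rootNearOne u : ℂ)‖ ^ 2 = u ^ 5 *
      (5 / 4 + 55 / 4 * u + 575 / 8 * u ^ 2 + 14081 / 64 * u ^ 3 + 19817 / 32 * u ^ 4
        + 10585 / 8 * u ^ 5) := by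
  rw [rootNearI, Complex.sq_norm, normSq_add_mul_I, norm_real, Real.norm_eq_abs, sq_abs,
    rootNearOne]
  ring

theorem sub_eq_sq_sub_sq_div_add {x y : ℝ} (hx : 0 ≤ x) (hy : 0 ≤ y) :
    x - y = (x ^ 2 - y ^ 2) / (x + y) := by
  rcases (add_nonneg hx hy).eq_or_lt with h | h
  · obtain ⟨rfl, rfl⟩ : x = 0 ∧ y = 0 := ⟨by linarith, by linarith⟩
    simp
  · field_simp
    ring

theorem eventually_norm_gap (K : ℝ) : ∀ᶠ u in 𝓝[>] (0 : ℝ), ∀ z₁ zi : ℂ,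
    ‖z₁ - rootNearOne u‖ ≤ K * u ^ 6 → ‖zi - rootNearI u‖ ≤ K * u ^ 6 →
      u ^ 5 / 8 ≤ ‖zi‖ - ‖z₁‖ ∧ ‖zi‖ - ‖z₁‖ ≤ 2 * u ^ 5 := by
  set T : ℝ → ℝ := fun u => (5 / 4 + 55 / 4 * u + 575 / 8 * u ^ 2 + 14081 / 64 * u ^ 3
    + 19817 / 32 * u ^ 4 + 10585 / 8 * u ^ 5) / (‖rootNearI u‖ + ‖(rootNearOne u : ℂ)‖)
  have hgap (u : ℝ) : ‖rootNearI u‖ - ‖(rootNearOne u : ℂ)‖ = u ^ 5 * T u := by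
    rw [sub_eq_sq_sub_sq_div_add (norm_nonneg _) (norm_nonneg _),
      norm_rootNearI_sq_sub_norm_rootNearOne_sq, mul_div_assoc]
  have hT : Tendsto T (𝓝 0) (𝓝 (5 / 8)) := by
    have hcont : ContinuousAt T 0 := by
      refine ContinuousAt.div (by fun_prop) (by unfold rootNearI rootNearOne; fun_prop) ?_
      simp [rootNearI, rootNearOne]
    convert hcont.tendsto using 2
    simp [T, rootNearI, rootNearOne]
    norm_num
  have hKu : Tendsto (fun u : ℝ => K * u) (𝓝 0) (𝓝 0) := by
    simpa using (continuous_const_mul K).tendsto (0 : ℝ)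
  filter_upwards [self_mem_nhdsWithin, nhdsWithin_le_nhds (hT.eventually (Ioo_mem_nhds
    (by norm_num : (1 / 4 : ℝ) < 5 / 8) (by norm_num : (5 / 8 : ℝ) < 1))),
    nhdsWithin_le_nhds (hKu.eventually (gt_mem_nhds (by norm_num : (0 : ℝ) < 1 / 16)))]
    with u (hu : 0 < u) ⟨hT1, hT2⟩ hKu z₁ zi h₁ hi
  have e₁ := abs_le.mp ((abs_norm_sub_norm_le z₁ _).trans h₁)
  have eᵢ := abs_le.mp ((abs_norm_sub_norm_le zi _).trans hi)
  have hu5 : 0 < u ^ 5 := pow_pos hu 5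
  have hK6 : K * u ^ 6 ≤ u ^ 5 / 16 := by nlinarith
  have hT1' := mul_lt_mul_of_pos_left hT1 hu5
  have hT2' := mul_lt_mul_of_pos_left hT2 hu5
  have := hgap u
  constructor <;> linarith

theorem exists_roots_near_with_gap : ∃ K > (0 : ℝ), ∀ᶠ u : ℝ in 𝓝[>] 0, ∃ z₁ zi : ℂ,
    (quarticFamily u).IsRoot z₁ ∧ (quarticFamily u).IsRoot zi ∧
    ‖z₁ - rootNearOne u‖ ≤ K * u ^ 6 ∧ ‖zi - rootNearI u‖ ≤ K * u ^ 6 ∧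
    u ^ 5 / 8 ≤ ‖zi‖ - ‖z₁‖ ∧ ‖zi‖ - ‖z₁‖ ≤ 2 * u ^ 5 := by
  obtain ⟨K₁, hK₁, h₁⟩ := exists_root_quarticFamily_near (a := fun u => (rootNearOne u : ℂ))
    (by unfold rootNearOne; fun_prop) (by simp [rootNearOne]) isBigO_eval_quarticFamily_rootNearOne
  obtain ⟨Kᵢ, hKᵢ, hᵢ⟩ := exists_root_quarticFamily_near (by unfold rootNearI; fun_prop)
    (by simp [rootNearI]) isBigO_eval_quarticFamily_rootNearI
  refine ⟨max K₁ Kᵢ, lt_max_of_lt_left hK₁, ?_⟩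
  filter_upwards [nhdsWithin_le_nhds h₁, nhdsWithin_le_nhds hᵢ, eventually_norm_gap (max K₁ Kᵢ)]
    with u ⟨z₁, hz₁, hd₁⟩ ⟨zi, hzi, hdi⟩ hgap
  have hd₁' : ‖z₁ - rootNearOne u‖ ≤ max K₁ Kᵢ * u ^ 6 :=
    hd₁.trans (by gcongr; exact le_max_left _ _)
  have hdi' : ‖zi - rootNearI u‖ ≤ max K₁ Kᵢ * u ^ 6 :=
    hdi.trans (by gcongr; exact le_max_right _ _)
  exact ⟨z₁, zi, hz₁, hzi, hd₁', hdi', hgap z₁ zi hd₁' hdi'⟩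

theorem eq_zero_of_isRoot_quarticFamily_inv {M z : ℂ} (hM : M ≠ 0)
    (h : (quarticFamily M⁻¹).IsRoot z) :
    M * (z ^ 4 - 1) - (z ^ 3 - z ^ 2 + z - 5) = 0 := by
  rw [IsRoot.def, eval_quarticFamily] at h
  linear_combination M * h + (z ^ 3 - z ^ 2 + z - 5) * mul_inv_cancel₀ hM

theorem norm_sub_le_of_eq_add_mul_pow {z a b c : ℂ} {u K L : ℝ} (hu₀ : 0 ≤ u) (hu₁ : u ≤ 1)
    (hK : 0 ≤ K) (hc : ‖c‖ ≤ L) (hb : b = a + c * u ^ 5) (h : ‖z - a‖ ≤ K * u ^ 6) :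
    ‖z - b‖ ≤ (K + L) * u ^ 5 := by
  have hu6 : u ^ 6 ≤ u ^ 5 := pow_le_pow_of_le_one hu₀ hu₁ (by norm_num)
  calc ‖z - b‖ = ‖(z - a) - c * u ^ 5‖ := by rw [hb]; ring_nf
    _ ≤ K * u ^ 6 + L * u ^ 5 := by
      refine (norm_sub_le _ _).trans (add_le_add h ?_)
      rw [norm_mul, norm_pow, norm_real, Real.norm_of_nonneg hu₀]
      gcongr
    _ ≤ (K + L) * u ^ 5 := by nlinarith

/-- For `P_M(X) = M(X⁴ − 1) − (X³ − X² + X − 5)`, there are roots `z₁` near `1`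
and `z_i` near `i` with the stated expansions up to `O(1/M⁵)`, whose absolute
values differ by a nonzero quantity that is `O(1/M⁵) = O(H(P_M)^{-5})`
(the height of `P_M` being `M`). -/
theorem degree_four_family_abs_sep :
    ∃ C : ℝ, 0 < C ∧ ∃ M₀ : ℕ, ∀ M : ℕ, M₀ ≤ M →
      ∃ z₁ zi : ℂ,
        (M : ℂ) * (z₁ ^ 4 - 1) - (z₁ ^ 3 - z₁ ^ 2 + z₁ - 5) = 0 ∧
        (M : ℂ) * (zi ^ 4 - 1) - (zi ^ 3 - zi ^ 2 + zi - 5) = 0 ∧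
        ‖(z₁ - (1 - 1 / (M : ℂ) - 2 / (M : ℂ) ^ 2
            - 11 / (2 * (M : ℂ) ^ 3) - 71 / (4 * (M : ℂ) ^ 4)))‖
          ≤ C / (M : ℝ) ^ 5 ∧
        ‖(zi - (Complex.I - Complex.I / (M : ℂ)
            - (1 + 4 * Complex.I) / (2 * (M : ℂ) ^ 2)
            - (4 + 11 * Complex.I) / (2 * (M : ℂ) ^ 3)
            - (66 + 143 * Complex.I) / (8 * (M : ℂ) ^ 4)))‖
          ≤ C / (M : ℝ) ^ 5 ∧
        0 < |‖z₁‖ - ‖zi‖| ∧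
        |‖z₁‖ - ‖zi‖| ≤ C / (M : ℝ) ^ 5 := by
  obtain ⟨K, hK, hroots⟩ := exists_roots_near_with_gap
  have hu : Tendsto (fun M : ℕ => (M : ℝ)⁻¹) atTop (𝓝[>] 0) :=
    tendsto_inv_atTop_nhdsGT_zero.comp tendsto_natCast_atTop_atTop
  obtain ⟨M₀, hM₀⟩ := eventually_atTop.mp
    (hu.eventually (hroots.and (Ioc_mem_nhdsGT (by norm_num : (0 : ℝ) < 1))))
  refine ⟨K + 100, by positivity, M₀, fun M hM => ?_⟩
  obtain ⟨⟨z₁, zi, hz₁, hzi, hd₁, hdi, hgap, hgap'⟩, hu₀, hu₁⟩ := hM₀ M hM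
  have hM : (M : ℂ) ≠ 0 := by exact_mod_cast (inv_pos.mp hu₀).ne'
  have hC : (K + 100) / (M : ℝ) ^ 5 = (K + 100) * ((M : ℝ)⁻¹) ^ 5 := by
    rw [inv_pow, div_eq_mul_inv]
  have hpos : 0 < ‖zi‖ - ‖z₁‖ := by linarith [pow_pos hu₀ 5]
  have habs : |‖z₁‖ - ‖zi‖| = ‖zi‖ - ‖z₁‖ := by rw [abs_sub_comm, abs_of_pos hpos]
  push_cast at hz₁ hzi
  refine ⟨z₁, zi, eq_zero_of_isRoot_quarticFamily_inv hM hz₁,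
    eq_zero_of_isRoot_quarticFamily_inv hM hzi, ?_, ?_, habs ▸ hpos,
    by rw [habs, hC]; nlinarith⟩ <;> rw [hC]
  · refine norm_sub_le_of_eq_add_mul_pow hu₀.le hu₁ hK.le (c := 501 / 8) (by norm_num) ?_ hd₁
    push_cast [rootNearOne]
    ring
  · refine norm_sub_le_of_eq_add_mul_pow hu₀.le hu₁ hK.le (c := 71 / 2 + 505 / 8 * I) ?_ ?_ hdi
    · refine (norm_add_le _ _).trans ?_
      norm_num
    · push_cast [rootNearI]
      ring
end
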